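/- arXiv:2010.05088 — 2 statements merged into one kernel-verified Lean document; each statement's English description precedes it below -/
import Mathlib

section
/- For every ε > 0, m ≥ 0, and T ∈ εℤ₊, the expectation of the average electron velocity equals the time-average of the expectations of the instantaneous electron velocity: Σ_{x∈εℤ} (x/T)·(a₁(x,T,m,ε)² + a₂(x,T,m,ε)²) = (ε/T) · Σ_{t=ε,2ε,…,T} Σ_{x∈εℤ} (a₂(x,t,m,ε)² − a₁(x,t,m,ε)²). -/
noncomputable section

/-- The `i`-th move of a checker path encoded as `f : Fin n → Bool`
(`true` = upwards-right move `(ε,ε)`, `false` = upwards-left move `(−ε,ε)`);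
out-of-range indices default to `true`. -/
def fcStep {n : ℕ} (f : Fin n → Bool) (i : ℕ) : Bool :=
  if h : i < n then f ⟨i, h⟩ else true

/-- The number of turns of the checker path `f`. -/
def fcTurns {n : ℕ} (f : Fin n → Bool) : ℕ :=
  ((Finset.range (n - 1)).filter fun i => fcStep f i ≠ fcStep f (i + 1)).card

/-- The position (in units of `ε`) of the checker path `f` after `i` moves,
starting from the origin. -/
def fcPos {n : ℕ} (f : Fin n → Bool) (i : ℕ) : ℤ :=
  ∑ j ∈ Finset.range i, (if fcStep f j then (1 : ℤ) else -1)

/-- Checker paths from `(0,0)` to `(εx, εn)` whose first step is to `(ε,ε)`. -/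
def fcPaths (n : ℕ) (x : ℤ) : Finset (Fin n → Bool) :=
  Finset.univ.filter fun f =>
    (∀ i : Fin n, (i : ℕ) = 0 → f i = true) ∧ fcPos f n = x

/-- The amplitude `a(εx, εn, m, ε)`. -/
def fcAmp (m ε : ℝ) (x : ℤ) (n : ℕ) : ℂ :=
  (((1 + m ^ 2 * ε ^ 2) ^ ((1 - (n : ℝ)) / 2) : ℝ) : ℂ) * Complex.I *
    ∑ f ∈ fcPaths n x, (-Complex.I * (m * ε)) ^ fcTurns f

/-- The probability `P(εx, εn, m, ε)` to find the electron at `(εx, εn)`. -/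
def fcP (m ε : ℝ) (x : ℤ) (n : ℕ) : ℝ := ‖fcAmp m ε x n‖ ^ 2

/-!
Splitting the path sum by the direction of the last step writes the amplitude at time `t` as
`(1 + m²ε²)^((1 - t)/2) · i · (ψ₁ + i ψ₂)(x)` with a real pair `ψ` obeying the lattice Dirac
equation `ψ₁(x, t+1) = ψ₁(x-1, t) + mε ψ₂(x-1, t)`, `ψ₂(x, t+1) = ψ₂(x+1, t) - mε ψ₁(x+1, t)`.
Right-moving mass is shifted by `+1` and left-moving mass by `-1`, so after a shift of the
summation variable the first moment obeys
`∑ x |ψ(x, t+1)|² = (1 + m²ε²) ∑ x |ψ(x, t)|² + ∑ (ψ₁² - ψ₂²)(x, t+1)`.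
Weighted by the squared prefactor `(1 + m²ε²)^(1 - t)`, this telescopes over `t`.
-/

open Finset

section Paths

variable {n : ℕ}

lemma fcStep_snoc_of_lt (f : Fin n → Bool) (b : Bool) {i : ℕ} (hi : i < n) :
    fcStep (Fin.snoc f b : Fin (n + 1) → Bool) i = fcStep f i := by
  simp only [fcStep, dif_pos hi, dif_pos (Nat.lt_succ_of_lt hi)]
  exact Fin.snoc_castSucc (α := fun _ => Bool) b f ⟨i, hi⟩

lemma fcStep_snoc_self (f : Fin n → Bool) (b : Bool) :
    fcStep (Fin.snoc f b : Fin (n + 1) → Bool) n = b := by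
  simp only [fcStep, dif_pos n.lt_succ_self]
  exact Fin.snoc_last (α := fun _ => Bool) ..

lemma snoc_init_eq_of_fcStep_eq {f : Fin (n + 1) → Bool} {b : Bool} (hf : fcStep f n = b) :
    Fin.snoc (Fin.init f) b = f := by
  rw [← hf, fcStep, dif_pos n.lt_succ_self]
  exact Fin.snoc_init_self (α := fun _ => Bool) f

lemma fcPos_snoc (f : Fin n → Bool) (b : Bool) :
    fcPos (Fin.snoc f b : Fin (n + 1) → Bool) (n + 1) = fcPos f n + if b then 1 else -1 := by
  rw [fcPos, sum_range_succ, fcStep_snoc_self]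
  congr 1
  exact sum_congr rfl fun j hj => by rw [fcStep_snoc_of_lt f b (mem_range.1 hj)]

lemma fcTurns_snoc (f : Fin (n + 1) → Bool) (b : Bool) :
    fcTurns (Fin.snoc f b : Fin (n + 2) → Bool) = fcTurns f + if fcStep f n = b then 0 else 1 := by
  simp only [fcTurns, card_filter, Nat.add_sub_cancel, sum_range_succ, fcStep_snoc_self,
    fcStep_snoc_of_lt f b n.lt_succ_self, ite_not]
  congr 1
  exact sum_congr rfl fun i hi => by
    rw [fcStep_snoc_of_lt f b (by simp at hi; omega), fcStep_snoc_of_lt f b (by simp at hi; omega)]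

lemma mem_fcPaths_succ {f : Fin (n + 1) → Bool} {x : ℤ} :
    f ∈ fcPaths (n + 1) x ↔ f 0 = true ∧ fcPos f (n + 1) = x := by
  have hstart : (∀ i : Fin (n + 1), (i : ℕ) = 0 → f i = true) ↔ f 0 = true :=
    ⟨fun h => h 0 rfl, fun h i hi => (Fin.ext hi : i = 0) ▸ h⟩
  simp only [fcPaths, mem_filter, mem_univ, true_and, hstart]

lemma snoc_mem_fcPaths {g : Fin (n + 1) → Bool} {b : Bool} {x : ℤ} :
    Fin.snoc g b ∈ fcPaths (n + 2) x ↔ g ∈ fcPaths (n + 1) (x - if b then 1 else -1) := by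
  rw [mem_fcPaths_succ, mem_fcPaths_succ, fcPos_snoc]
  have h0 : (Fin.snoc g b : Fin (n + 2) → Bool) 0 = g 0 := by simp [Fin.snoc]
  rw [h0]
  constructor <;> rintro ⟨h1, h2⟩ <;> exact ⟨h1, by omega⟩

lemma sum_filter_fcStep_last_eq_sum_snoc {M : Type*} [AddCommMonoid M] (x : ℤ) (b : Bool)
    (w : (Fin (n + 2) → Bool) → M) :
    ∑ f ∈ (fcPaths (n + 2) x).filter (fcStep · (n + 1) = b), w f
      = ∑ g ∈ fcPaths (n + 1) (x - if b then 1 else -1), w (Fin.snoc g b) := by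
  refine sum_nbij' Fin.init (Fin.snoc · b) (fun f hf => ?_) (fun g hg => ?_) (fun f hf => ?_)
    (fun g _ => Fin.init_snoc (α := fun _ => Bool) ..) (fun f hf => ?_)
  · rw [mem_filter] at hf
    rw [← snoc_mem_fcPaths, snoc_init_eq_of_fcStep_eq hf.2]
    exact hf.1
  · exact mem_filter.2 ⟨snoc_mem_fcPaths.2 hg, fcStep_snoc_self g b⟩
  · exact snoc_init_eq_of_fcStep_eq (mem_filter.1 hf).2
  · rw [snoc_init_eq_of_fcStep_eq (mem_filter.1 hf).2]

end Paths

section LastStep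

variable {R : Type*} [CommSemiring R]

def fcLastStepSum (z : R) (n : ℕ) (x : ℤ) (b : Bool) : R :=
  ∑ f ∈ (fcPaths (n + 1) x).filter (fcStep · n = b), z ^ fcTurns f

lemma sum_fcPaths_eq_fcLastStepSum (z : R) (n : ℕ) (x : ℤ) :
    ∑ f ∈ fcPaths (n + 1) x, z ^ fcTurns f
      = fcLastStepSum z n x true + fcLastStepSum z n x false := by
  rw [← sum_filter_add_sum_filter_not _ (fcStep · n = true)]
  simp only [Bool.not_eq_true, fcLastStepSum]

lemma fcLastStepSum_zero (z : R) (x : ℤ) (b : Bool) :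
    fcLastStepSum z 0 x b = if b = true ∧ x = 1 then 1 else 0 := by
  have hpaths : (fcPaths 1 x).filter (fcStep · 0 = b)
      = if b = true ∧ x = 1 then {fun _ => true} else ∅ := by
    ext f
    have hf : f = (fun _ => true) ↔ f 0 = true := by simp [funext_iff, Fin.forall_fin_one]
    have hpos : fcPos f 1 = if f 0 then 1 else -1 := by simp [fcPos, fcStep]
    have hstep : fcStep f 0 = f 0 := by simp [fcStep]
    rw [mem_filter, mem_fcPaths_succ, hpos, hstep]
    split_ifs with h <;> simp only [mem_singleton, notMem_empty, hf] <;> grind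
  rw [fcLastStepSum, hpaths]
  split_ifs <;> simp [fcTurns]

lemma fcLastStepSum_succ (z : R) (n : ℕ) (x : ℤ) (b : Bool) :
    fcLastStepSum z (n + 1) x b
      = fcLastStepSum z n (x - if b then 1 else -1) b
        + z * fcLastStepSum z n (x - if b then 1 else -1) (!b) := by
  rw [fcLastStepSum, sum_filter_fcStep_last_eq_sum_snoc,
    ← sum_filter_add_sum_filter_not _ (fcStep · n = b)]
  simp only [fcTurns_snoc, fcLastStepSum, mul_sum]
  congr 1
  · exact sum_congr rfl fun g hg => by rw [if_pos (mem_filter.1 hg).2, add_zero]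
  · refine sum_congr (filter_congr fun g _ => by cases b <;> simp) fun g hg => ?_
    rw [if_neg (by rw [(mem_filter.1 hg).2]; cases b <;> simp), pow_succ, mul_comm]

end LastStep

lemma Function.HasFiniteSupport.summable_of_eq_zero {α M E : Type*} [Zero M] [AddCommMonoid E]
    [TopologicalSpace E] {ψ : α → M} (hψ : ψ.HasFiniteSupport) {F : α → E}
    (hF : ∀ x, ψ x = 0 → F x = 0) : Summable F :=
  summable_of_hasFiniteSupport (hψ.subset fun x hx h => hx (hF x h))

lemma tsum_comp_sub_one_add_comp_add_one {u v : ℤ → ℝ} (hu : Summable u) (hv : Summable v) :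
    ∑' x, (u (x - 1) + v (x + 1)) = ∑' x, (u x + v x) := by
  have hu' : Summable fun x => u (x - 1) := (Equiv.subRight 1).summable_iff.2 hu
  have hv' : Summable fun x => v (x + 1) := (Equiv.addRight 1).summable_iff.2 hv
  rw [hu'.tsum_add hv', hu.tsum_add hv]
  exact congr_arg₂ (· + ·) ((Equiv.subRight 1).tsum_eq u) ((Equiv.addRight 1).tsum_eq v)

def diracStep (c : ℝ) (ψ : ℤ → ℝ × ℝ) : ℤ → ℝ × ℝ := fun x =>
  ((ψ (x - 1)).1 + c * (ψ (x - 1)).2, (ψ (x + 1)).2 - c * (ψ (x + 1)).1)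

/-- `diracWave c n` is the state at time `n + 1`, when the forced first step has reached `x = 1`. -/
def diracWave (c : ℝ) : ℕ → ℤ → ℝ × ℝ
  | 0 => Pi.single 1 (1, 0)
  | n + 1 => diracStep c (diracWave c n)

open Complex in
lemma fcLastStepSum_eq_diracWave (c : ℝ) (n : ℕ) (x : ℤ) :
    fcLastStepSum (-I * c) n x true = (diracWave c n x).1
      ∧ fcLastStepSum (-I * c) n x false = I * (diracWave c n x).2 := by
  induction n generalizing x with
  | zero => by_cases hx : x = 1 <;> simp [fcLastStepSum_zero, diracWave, hx]
  | succ n ih =>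
    obtain ⟨hr, hl⟩ := ih (x - 1)
    obtain ⟨hr', hl'⟩ := ih (x + 1)
    simp only [fcLastStepSum_succ, ite_true, Bool.false_eq_true, ite_false, sub_neg_eq_add,
      Bool.not_true, Bool.not_false, hr, hl, hr', hl', diracWave, diracStep]
    push_cast
    constructor
    · linear_combination (-(c : ℂ) * (diracWave c n (x - 1)).2) * I_sq
    · ring

lemma hasFiniteSupport_diracStep (c : ℝ) {ψ : ℤ → ℝ × ℝ} (hψ : ψ.HasFiniteSupport) :
    (diracStep c ψ).HasFiniteSupport := by
  refine ((hψ.comp_of_injective (sub_left_injective (b := 1))).union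
    (hψ.comp_of_injective (add_left_injective 1))).subset fun x hx => ?_
  by_contra h
  simp only [Set.mem_union, Function.mem_support, Function.comp_apply, not_or, not_not] at h
  simp [diracStep, h.1, h.2] at hx

lemma hasFiniteSupport_diracWave (c : ℝ) (n : ℕ) : (diracWave c n).HasFiniteSupport := by
  induction n with
  | zero => exact (Set.finite_singleton 1).subset (Pi.support_single_subset)
  | succ n ih => exact hasFiniteSupport_diracStep c ih

lemma tsum_mul_normSq_diracStep (c : ℝ) {ψ : ℤ → ℝ × ℝ} (hψ : ψ.HasFiniteSupport) :
    ∑' x : ℤ, (x : ℝ) * ((diracStep c ψ x).1 ^ 2 + (diracStep c ψ x).2 ^ 2)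
      = (1 + c ^ 2) * ∑' x : ℤ, (x : ℝ) * ((ψ x).1 ^ 2 + (ψ x).2 ^ 2)
        + ∑' x : ℤ, ((diracStep c ψ x).1 ^ 2 - (diracStep c ψ x).2 ^ 2) := by
  set g : ℤ → ℝ := fun x => (ψ x).1 + c * (ψ x).2
  set h : ℤ → ℝ := fun x => (ψ x).2 - c * (ψ x).1
  have hs {F : ℤ → ℝ} (hF : ∀ x, ψ x = 0 → F x = 0) : Summable F := hψ.summable_of_eq_zero hF
  have hmoment : ∑' x : ℤ, (x : ℝ) * (g (x - 1) ^ 2 + h (x + 1) ^ 2)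
      = ∑' x : ℤ, (((x : ℝ) + 1) * g x ^ 2 + ((x : ℝ) - 1) * h x ^ 2) := by
    rw [← tsum_comp_sub_one_add_comp_add_one (hs fun x hx => by simp [g, hx])
      (hs fun x hx => by simp [h, hx])]
    congr! 2 with x
    push_cast
    ring
  have hvelocity : ∑' x : ℤ, (g (x - 1) ^ 2 - h (x + 1) ^ 2) = ∑' x : ℤ, (g x ^ 2 - h x ^ 2) := by
    simpa only [sub_eq_add_neg] using tsum_comp_sub_one_add_comp_add_one (u := fun x => g x ^ 2)
      (v := fun x => -h x ^ 2) (hs fun x hx => by simp [g, hx]) (hs fun x hx => by simp [h, hx])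
  show ∑' x : ℤ, (x : ℝ) * (g (x - 1) ^ 2 + h (x + 1) ^ 2)
    = _ + ∑' x : ℤ, (g (x - 1) ^ 2 - h (x + 1) ^ 2)
  rw [hmoment, hvelocity, ← tsum_mul_left, ← Summable.tsum_add
    ((hs fun x hx => by simp [hx]).mul_left _) (hs fun x hx => by simp [g, h, hx])]
  congr! 2 with x
  ring

lemma tsum_mul_normSq_diracWave (c : ℝ) (n : ℕ) :
    (∑' x : ℤ, (x : ℝ) * ((diracWave c n x).1 ^ 2 + (diracWave c n x).2 ^ 2)) / (1 + c ^ 2) ^ n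
      = ∑ k ∈ range (n + 1),
          (∑' x : ℤ, ((diracWave c k x).1 ^ 2 - (diracWave c k x).2 ^ 2)) / (1 + c ^ 2) ^ k := by
  induction n with
  | zero =>
    simp only [diracWave, zero_add, sum_range_one, pow_zero, div_one]
    rw [tsum_eq_single 1 fun x hx => by simp [hx], tsum_eq_single 1 fun x hx => by simp [hx]]
    simp
  | succ n ih =>
    have hq : (1 + c ^ 2 : ℝ) ≠ 0 := by positivity
    rw [sum_range_succ, ← ih, diracWave,
      tsum_mul_normSq_diracStep c (hasFiniteSupport_diracWave c n)]
    field_simp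
    ring

lemma fcPaths_zero_eq_empty {x : ℤ} (hx : x ≠ 0) : fcPaths 0 x = ∅ := by
  simp [fcPaths, fcPos, hx.symm]

section Amplitude

open Complex

lemma fcAmp_succ (m ε : ℝ) (x : ℤ) (n : ℕ) :
    fcAmp m ε x (n + 1) = ((1 + (m * ε) ^ 2) ^ ((1 - ((n + 1 : ℕ) : ℝ)) / 2) : ℝ) * I
      * ((diracWave (m * ε) n x).1 + I * (diracWave (m * ε) n x).2) := by
  obtain ⟨hr, hl⟩ := fcLastStepSum_eq_diracWave (m * ε) n x
  rw [fcAmp, ← ofReal_mul, sum_fcPaths_eq_fcLastStepSum, hr, hl, mul_pow]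

lemma sq_rpow_one_sub_succ_div_two {q : ℝ} (hq : 0 < q) (n : ℕ) :
    (q ^ ((1 - ((n + 1 : ℕ) : ℝ)) / 2)) ^ 2 = (q ^ n)⁻¹ := by
  rw [← Real.rpow_natCast (q ^ _) 2, ← Real.rpow_mul hq.le, ← Real.rpow_natCast q n,
    ← Real.rpow_neg hq.le]
  congr 1
  push_cast
  ring

lemma re_sq_add_im_sq_fcAmp_succ (m ε : ℝ) (x : ℤ) (n : ℕ) :
    (fcAmp m ε x (n + 1)).re ^ 2 + (fcAmp m ε x (n + 1)).im ^ 2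
      = ((diracWave (m * ε) n x).1 ^ 2 + (diracWave (m * ε) n x).2 ^ 2)
          / (1 + (m * ε) ^ 2) ^ n := by
  rw [fcAmp_succ, div_eq_mul_inv _ ((1 + (m * ε) ^ 2) ^ n),
    ← sq_rpow_one_sub_succ_div_two (by positivity)]
  simp [mul_re, mul_im]
  ring

lemma im_sq_sub_re_sq_fcAmp_succ (m ε : ℝ) (x : ℤ) (n : ℕ) :
    (fcAmp m ε x (n + 1)).im ^ 2 - (fcAmp m ε x (n + 1)).re ^ 2
      = ((diracWave (m * ε) n x).1 ^ 2 - (diracWave (m * ε) n x).2 ^ 2)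
          / (1 + (m * ε) ^ 2) ^ n := by
  rw [fcAmp_succ, div_eq_mul_inv _ ((1 + (m * ε) ^ 2) ^ n),
    ← sq_rpow_one_sub_succ_div_two (by positivity)]
  simp [mul_re, mul_im]
  ring

end Amplitude

theorem stmt1_general (m ε : ℝ) (T : ℝ) (N : ℕ) :
    ∑' X : ℤ, (ε * (X : ℝ) / T) * ((fcAmp m ε X N).re ^ 2 + (fcAmp m ε X N).im ^ 2)
      = (ε / T) * ∑ k ∈ Finset.Icc 1 N,
          ∑' X : ℤ, ((fcAmp m ε X k).im ^ 2 - (fcAmp m ε X k).re ^ 2) := by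
  simp only [mul_div_right_comm ε, mul_assoc (ε / T)]
  rw [tsum_mul_left]
  congr 1
  cases N with
  | zero =>
    have hvanish (X : ℤ) : (X : ℝ) * ((fcAmp m ε X 0).re ^ 2 + (fcAmp m ε X 0).im ^ 2) = 0 := by
      rcases eq_or_ne X 0 with rfl | hX
      · simp
      · simp [fcAmp, fcPaths_zero_eq_empty hX]
    simp [hvanish]
  | succ n =>
    rw [← Ico_add_one_right_eq_Icc, sum_Ico_eq_sum_range, Nat.add_sub_cancel]
    simp only [add_comm 1, re_sq_add_im_sq_fcAmp_succ, im_sq_sub_re_sq_fcAmp_succ, ← mul_div_assoc,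
      tsum_div_const]
    exact tsum_mul_normSq_diracWave (m * ε) n

/-- The expectation of the average electron velocity equals the time-average of the
expectations of the instantaneous electron velocity. -/
theorem stmt1 (m ε : ℝ) (hε : 0 < ε) (hm : 0 ≤ m) (T : ℝ) (N : ℕ) (hN : 0 < N)
    (hT : T = ε * N) :
    ∑' X : ℤ, (ε * (X : ℝ) / T) * ((fcAmp m ε X N).re ^ 2 + (fcAmp m ε X N).im ^ 2)
      = (ε / T) * ∑ k ∈ Finset.Icc 1 N,
          ∑' X : ℤ, ((fcAmp m ε X k).im ^ 2 - (fcAmp m ε X k).re ^ 2) :=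
  stmt1_general m ε T N
end
end

section
/- For every ε > 0, m ≥ 0, and t ∈ εℤ₊, we have Σ_{x∈εℤ} a(x,t,m,ε) = i·exp(−i·((t−ε)/ε)·arctan(mε)). -/
noncomputable section

/-!
A checker path whose first step goes to `(ε,ε)` is determined by its set of turns, and every
subset of the `n - 1` interior points is the turn set of exactly one such path. Hence
`Σ_s z ^ turns(s) = (1 + z) ^ (n - 1)`, so summing the amplitudes over `x` gives
`(1 + m²ε²) ^ ((1 - n) / 2) · i · (1 - imε) ^ (n - 1)`. Writing
`1 - imε = √(1 + m²ε²) · exp (-i arctan (mε))`, the modulus cancels the normalising factor.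
-/

open Finset

def fcStartPaths (n : ℕ) : Finset (Fin n → Bool) :=
  univ.filter fun f => ∀ i : Fin n, (i : ℕ) = 0 → f i = true

def fcTurnSet {n : ℕ} (f : Fin n → Bool) : Finset ℕ :=
  (range (n - 1)).filter fun i => fcStep f i ≠ fcStep f (i + 1)

def fcOfTurnSet (n : ℕ) (t : Finset ℕ) : Fin n → Bool :=
  fun i => decide (#(t.filter (· < (i : ℕ))) % 2 = 0)

lemma card_filter_lt_succ (t : Finset ℕ) (j : ℕ) :
    #(t.filter (· < j + 1)) = #(t.filter (· < j)) + if j ∈ t then 1 else 0 := by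
  have hsplit : t.filter (· < j + 1) = t.filter (· < j) ∪ t.filter (· = j) := by
    rw [← filter_or]
    exact filter_congr fun x _ => Nat.lt_succ_iff_lt_or_eq
  have hdisj : Disjoint (t.filter (· < j)) (t.filter (· = j)) :=
    disjoint_filter.mpr fun _ _ h => h.ne
  rw [hsplit, card_union_of_disjoint hdisj, filter_eq']
  split_ifs <;> simp

lemma fcStep_fcOfTurnSet {n i : ℕ} (t : Finset ℕ) (hi : i < n) :
    fcStep (fcOfTurnSet n t) i = decide (#(t.filter (· < i)) % 2 = 0) := by
  simp [fcStep, fcOfTurnSet, hi]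

lemma fcOfTurnSet_mem_fcStartPaths (n : ℕ) (t : Finset ℕ) :
    fcOfTurnSet n t ∈ fcStartPaths n := by
  simp +contextual [fcStartPaths, fcOfTurnSet]

lemma fcTurnSet_fcOfTurnSet {n : ℕ} {t : Finset ℕ} (ht : t ⊆ range (n - 1)) :
    fcTurnSet (fcOfTurnSet n t) = t := by
  ext i
  simp only [fcTurnSet, mem_filter, mem_range]
  refine ⟨fun ⟨hi, hturn⟩ => ?_, fun hit => ?_⟩
  · rw [fcStep_fcOfTurnSet t (by omega), fcStep_fcOfTurnSet t (by omega),
      card_filter_lt_succ] at hturn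
    by_contra hit
    simp [hit] at hturn
  · have hi : i < n - 1 := mem_range.mp (ht hit)
    refine ⟨hi, ?_⟩
    rw [fcStep_fcOfTurnSet t (by omega), fcStep_fcOfTurnSet t (by omega),
      card_filter_lt_succ]
    simp only [hit, if_true, ne_eq, decide_eq_decide]
    omega

lemma fcOfTurnSet_fcTurnSet {n : ℕ} {f : Fin n → Bool} (hf : f ∈ fcStartPaths n) :
    fcOfTurnSet n (fcTurnSet f) = f := by
  simp only [fcStartPaths, mem_filter, mem_univ, true_and] at hf
  suffices h : ∀ j (hj : j < n), fcOfTurnSet n (fcTurnSet f) ⟨j, hj⟩ = f ⟨j, hj⟩ from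
    funext fun i => h i i.2
  intro j
  induction j with
  | zero => intro hj; simp [fcOfTurnSet, hf ⟨0, hj⟩ rfl]
  | succ j ih =>
    intro hj
    have hj' : j < n := by omega
    have hturn : j ∈ fcTurnSet f ↔ f ⟨j, hj'⟩ ≠ f ⟨j + 1, hj⟩ := by
      rw [fcTurnSet, mem_filter, mem_range, fcStep, fcStep, dif_pos hj', dif_pos hj]
      simp [show j < n - 1 by omega]
    have ihj := ih hj'
    simp only [fcOfTurnSet] at ihj ⊢
    rw [card_filter_lt_succ]
    cases h₁ : f ⟨j, hj'⟩ <;> cases h₂ : f ⟨j + 1, hj⟩ <;>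
      simp [h₁, h₂] at ihj hturn ⊢ <;> simp [hturn] <;> omega

theorem sum_pow_fcTurns {R : Type*} [CommSemiring R] (n : ℕ) (z : R) :
    ∑ f ∈ fcStartPaths n, z ^ fcTurns f = (z + 1) ^ (n - 1) := by
  have hbinom : (z + 1) ^ (n - 1) = ∑ t ∈ (range (n - 1)).powerset, z ^ #t := by
    simpa using prod_add_one (f := fun _ => z) (range (n - 1))
  rw [hbinom]
  exact sum_nbij' fcTurnSet (fcOfTurnSet n)
    (fun _ _ => mem_powerset.mpr (filter_subset _ _))
    (fun t _ => fcOfTurnSet_mem_fcStartPaths n t)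
    (fun _ hf => fcOfTurnSet_fcTurnSet hf)
    (fun _ ht => fcTurnSet_fcOfTurnSet (mem_powerset.mp ht))
    (fun _ _ => rfl)

lemma fcPaths_eq_filter (n : ℕ) (x : ℤ) :
    fcPaths n x = (fcStartPaths n).filter fun f => fcPos f n = x := by
  simp [fcPaths, fcStartPaths, filter_filter]

theorem tsum_fcAmp (m ε : ℝ) (n : ℕ) :
    ∑' x : ℤ, fcAmp m ε x n
      = (((1 + m ^ 2 * ε ^ 2) ^ ((1 - (n : ℝ)) / 2) : ℝ) : ℂ) * Complex.I *
          ∑ f ∈ fcStartPaths n, (-Complex.I * (m * ε)) ^ fcTurns f := by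
  set ends := (fcStartPaths n).image fun f => fcPos f n
  have hsupp : ∀ x ∉ ends, fcAmp m ε x n = 0 := by
    intro x hx
    have hempty : fcPaths n x = ∅ := by
      rw [fcPaths_eq_filter, filter_eq_empty_iff]
      exact fun f hf hfx => hx (mem_image.mpr ⟨f, hf, hfx⟩)
    simp [fcAmp, hempty]
  rw [tsum_eq_sum hsupp, ← sum_fiberwise_of_maps_to (t := ends)
    (fun f hf => mem_image_of_mem _ hf), mul_sum]
  simp only [fcAmp, fcPaths_eq_filter]

theorem one_sub_I_mul_eq_sqrt_mul_exp_arctan (x : ℝ) :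
    1 - Complex.I * x
      = (Real.sqrt (1 + x ^ 2) : ℂ) * Complex.exp (-Complex.I * (Real.arctan x : ℂ)) := by
  have hangle : -Complex.I * (Real.arctan x : ℂ) = ((-Real.arctan x : ℝ) : ℂ) * Complex.I := by
    push_cast; ring
  rw [hangle, Complex.exp_mul_I, ← Complex.ofReal_cos, ← Complex.ofReal_sin,
    Real.cos_neg, Real.sin_neg, Real.cos_arctan, Real.sin_arctan]
  have hsqrt : (Real.sqrt (1 + x ^ 2) : ℂ) ≠ 0 := by
    rw [ne_eq, Complex.ofReal_eq_zero]
    positivity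
  push_cast
  field_simp
  ring

theorem rpow_one_sub_div_two_mul_sqrt_pow {x : ℝ} (hx : 0 < x) {n : ℕ} (hn : 0 < n) :
    x ^ ((1 - (n : ℝ)) / 2) * Real.sqrt x ^ (n - 1) = 1 := by
  rw [← Real.rpow_natCast, Real.sqrt_eq_rpow, ← Real.rpow_mul hx.le, ← Real.rpow_add hx,
    Nat.cast_sub hn, Nat.cast_one]
  ring_nf
  exact Real.rpow_zero x

theorem stmt5_general (m ε : ℝ) (hε : 0 < ε) (t : ℝ) (n : ℕ) (hn : 0 < n)
    (ht : t = ε * n) :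
    ∑' X : ℤ, fcAmp m ε X n
      = Complex.I * Complex.exp (-Complex.I * (((t - ε) / ε : ℝ) : ℂ)
          * ((Real.arctan (m * ε) : ℝ) : ℂ)) := by
  have hsteps : (((t - ε) / ε : ℝ) : ℂ) = ((n - 1 : ℕ) : ℂ) := by
    have hreal : (t - ε) / ε = ((n - 1 : ℕ) : ℝ) := by
      rw [ht, Nat.cast_sub hn]
      field_simp
      ring
    exact_mod_cast hreal
  have hexp : Complex.exp (-Complex.I * ((n - 1 : ℕ) : ℂ) * (Real.arctan (m * ε) : ℂ))
      = Complex.exp (-Complex.I * (Real.arctan (m * ε) : ℂ)) ^ (n - 1) := by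
    rw [← Complex.exp_nat_mul]
    ring_nf
  have hnorm := congrArg Complex.ofReal <|
    rpow_one_sub_div_two_mul_sqrt_pow (show 0 < 1 + (m * ε) ^ 2 by positivity) hn
  push_cast at hnorm
  rw [tsum_fcAmp, sum_pow_fcTurns, hsteps, hexp, neg_mul, neg_add_eq_sub,
    ← Complex.ofReal_mul, one_sub_I_mul_eq_sqrt_mul_exp_arctan, mul_pow,
    show m ^ 2 * ε ^ 2 = (m * ε) ^ 2 by ring]
  linear_combination (Complex.I * Complex.exp (-Complex.I * (Real.arctan (m * ε) : ℂ)) ^ (n - 1))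
    * hnorm

/-- For `t = εn ∈ εℤ₊`, `Σ_x a(x,t,m,ε) = i·exp(−i·((t−ε)/ε)·arctan(mε))`. -/
theorem stmt5 (m ε : ℝ) (hε : 0 < ε) (hm : 0 ≤ m) (t : ℝ) (n : ℕ) (hn : 0 < n)
    (ht : t = ε * n) :
    ∑' X : ℤ, fcAmp m ε X n
      = Complex.I * Complex.exp (-Complex.I * (((t - ε) / ε : ℝ) : ℂ)
          * ((Real.arctan (m * ε) : ℝ) : ℂ)) :=
  stmt5_general m ε hε t n hn ht
end
end
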